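/- arXiv:2309.05167 — 2 statements merged into one kernel-verified Lean document; each statement's English description precedes it below -/
import Mathlib

section
/- Proposition 2 (mixed-monotonicity output bound, one output component): Let n be a positive natural number, a, b : Fin n → ℝ with a j ≤ b j for all j, and let f : (Fin n → ℝ) → ℝ be differentiable on an open convex set containing the box B = {x : ∀ j, a j ≤ x j ≤ b j}. Suppose J̲, J̄ : Fin n → ℝ satisfy J̲ j ≤ ∂f/∂x_j (x) ≤ J̄ j for all x ∈ B and all j. For each j let J* j = (J̲ j + J̄ j)/2 and define: if J* j ≥ 0 then ψ̲ j = a j, ψ̄ j = b j, α j = min(0, J̲ j); otherwise ψ̲ j = b j, ψ̄ j = a j, α j = max(0, J̄ j). Then for every x ∈ B: f(ψ̲) - Σ_j α j · (ψ̲ j - ψ̄ j) ≤ f(x) ≤ f(ψ̄) + Σ_j α j · (ψ̲ j - ψ̄ j). -/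
/-! By the mean value theorem on the (convex) box, `f y - f x = ∑ j, ∂ⱼf(c) (y j - x j)` for
some `c` in the box. Each term is then bounded separately: if `ψlo j = a j`, `ψhi j = b j` and
`α j = min 0 (Jlo j)`, then `α j ≤ 0` and `α j ≤ ∂ⱼf(c)`, so `∂ⱼf(c) t ≥ α j t ≥ α j (b j - a j)`
for `0 ≤ t ≤ b j - a j`; the other corner choice is symmetric with `α j = max 0 (Jhi j)`. Either
choice gives a valid bound; the sign of the midpoint `(Jlo j + Jhi j) / 2` only selects the
tighter one. -/

lemma min_zero_mul_le_mul {lo d s t : ℝ} (hd : lo ≤ d) (ht : 0 ≤ t) (hts : t ≤ s) :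
    min 0 lo * s ≤ d * t :=
  calc min 0 lo * s ≤ min 0 lo * t := mul_le_mul_of_nonpos_left hts (min_le_left _ _)
    _ ≤ d * t := mul_le_mul_of_nonneg_right ((min_le_right _ _).trans hd) ht

lemma mul_le_max_zero_mul {hi d s t : ℝ} (hd : d ≤ hi) (ht : 0 ≤ t) (hts : t ≤ s) :
    d * t ≤ max 0 hi * s :=
  calc d * t ≤ max 0 hi * t := mul_le_mul_of_nonneg_right (hd.trans (le_max_right _ _)) ht
    _ ≤ max 0 hi * s := mul_le_mul_of_nonneg_left hts (le_max_left _ _)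

lemma neg_slack_le_partial_mul_sub (p : Prop) [Decidable p] {lo hi d a b x ψlo ψhi α : ℝ}
    (hd : lo ≤ d ∧ d ≤ hi) (hx : a ≤ x ∧ x ≤ b)
    (hψlo : ψlo = if p then a else b) (hψhi : ψhi = if p then b else a)
    (hα : α = if p then min 0 lo else max 0 hi) :
    -(α * (ψlo - ψhi)) ≤ d * (x - ψlo) ∧ -(α * (ψlo - ψhi)) ≤ d * (ψhi - x) := by
  obtain ⟨hlo, hhi⟩ := hd
  obtain ⟨hax, hxb⟩ := hx
  subst hψlo hψhi hα
  split_ifs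
  · constructor
    · linarith [min_zero_mul_le_mul hlo (sub_nonneg.2 hax) (sub_le_sub_right hxb a)]
    · linarith [min_zero_mul_le_mul hlo (sub_nonneg.2 hxb) (sub_le_sub_left hax b)]
  · constructor
    · linarith [mul_le_max_zero_mul hhi (sub_nonneg.2 hxb) (sub_le_sub_left hax b)]
    · linarith [mul_le_max_zero_mul hhi (sub_nonneg.2 hax) (sub_le_sub_right hxb a)]

lemma ite_mem_Icc (p : Prop) [Decidable p] {a b : ℝ} (hab : a ≤ b) :
    (if p then a else b) ∈ Set.Icc a b ∧ (if p then b else a) ∈ Set.Icc a b := by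
  split_ifs <;> simp [hab]

lemma ContinuousLinearMap.pi_apply_eq_sum_single {ι : Type*} [Fintype ι] [DecidableEq ι]
    (L : (ι → ℝ) →L[ℝ] ℝ) (v : ι → ℝ) : L v = ∑ j, L (Pi.single j 1) * v j := by
  nth_rw 1 [pi_eq_sum_univ' v]
  simp only [map_sum, map_smul, smul_eq_mul, mul_comm]

lemma Convex.le_sub_of_le_fderiv {E : Type*} [NormedAddCommGroup E] [NormedSpace ℝ E]
    {f : E → ℝ} {s : Set E} (hs : Convex ℝ s) (hf : ∀ c ∈ s, DifferentiableAt ℝ f c)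
    {x y : E} (hx : x ∈ s) (hy : y ∈ s) {m : ℝ} (hm : ∀ c ∈ s, m ≤ fderiv ℝ f c (y - x)) :
    m ≤ f y - f x := by
  obtain ⟨c, hc, hfc⟩ := domain_mvt (fun c hc ↦ (hf c hc).hasFDerivAt.hasFDerivWithinAt) hs hx hy
  exact hfc ▸ hm c (hs.segment_subset hx hy hc)

lemma Convex.sum_le_sub_of_le_partial {ι : Type*} [Fintype ι] [DecidableEq ι]
    {f : (ι → ℝ) → ℝ} {s : Set (ι → ℝ)} (hs : Convex ℝ s) (hf : ∀ c ∈ s, DifferentiableAt ℝ f c)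
    {x y : ι → ℝ} (hx : x ∈ s) (hy : y ∈ s) {m : ι → ℝ}
    (hm : ∀ c ∈ s, ∀ j, m j ≤ fderiv ℝ f c (Pi.single j 1) * (y j - x j)) :
    ∑ j, m j ≤ f y - f x :=
  hs.le_sub_of_le_fderiv hf hx hy fun c hc ↦
    (fderiv ℝ f c).pi_apply_eq_sum_single (y - x) ▸ Finset.sum_le_sum fun j _ ↦ hm c hc j

open Finset in
theorem mixed_monotonicity_bound_general
    {n : ℕ} (a b : Fin n → ℝ)
    (f : (Fin n → ℝ) → ℝ)
    (U : Set (Fin n → ℝ)) (hUopen : IsOpen U)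
    (hBU : {x : Fin n → ℝ | ∀ j, a j ≤ x j ∧ x j ≤ b j} ⊆ U)
    (hf : DifferentiableOn ℝ f U)
    (Jlo Jhi : Fin n → ℝ)
    (hJ : ∀ x ∈ {x : Fin n → ℝ | ∀ j, a j ≤ x j ∧ x j ≤ b j}, ∀ j,
        Jlo j ≤ fderiv ℝ f x (Pi.single j 1) ∧ fderiv ℝ f x (Pi.single j 1) ≤ Jhi j)
    (ψlo ψhi α : Fin n → ℝ)
    (hψlo : ∀ j, ψlo j = if 0 ≤ (Jlo j + Jhi j) / 2 then a j else b j)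
    (hψhi : ∀ j, ψhi j = if 0 ≤ (Jlo j + Jhi j) / 2 then b j else a j)
    (hα : ∀ j, α j = if 0 ≤ (Jlo j + Jhi j) / 2 then min 0 (Jlo j) else max 0 (Jhi j)) :
    ∀ x ∈ {x : Fin n → ℝ | ∀ j, a j ≤ x j ∧ x j ≤ b j},
      f ψlo - ∑ j, α j * (ψlo j - ψhi j) ≤ f x ∧
      f x ≤ f ψhi + ∑ j, α j * (ψlo j - ψhi j) := by
  intro x hx
  set B := {x : Fin n → ℝ | ∀ j, a j ≤ x j ∧ x j ≤ b j}
  have hB : Convex ℝ B := (Set.ext fun _ ↦ forall_and : B = Set.Icc a b) ▸ convex_Icc a b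
  have hfB : ∀ c ∈ B, DifferentiableAt ℝ f c := fun c hc ↦
    hf.differentiableAt (hUopen.mem_nhds (hBU hc))
  have hcorners j := ite_mem_Icc (0 ≤ (Jlo j + Jhi j) / 2) ((hx j).1.trans (hx j).2)
  have hψloB : ψlo ∈ B := fun j ↦ hψlo j ▸ (hcorners j).1
  have hψhiB : ψhi ∈ B := fun j ↦ hψhi j ▸ (hcorners j).2
  have hslack c (hc : c ∈ B) j :=
    neg_slack_le_partial_mul_sub _ (hJ c hc j) (hx j) (hψlo j) (hψhi j) (hα j)
  have lower := hB.sum_le_sub_of_le_partial hfB hψloB hx fun c hc j ↦ (hslack c hc j).1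
  have upper := hB.sum_le_sub_of_le_partial hfB hx hψhiB fun c hc j ↦ (hslack c hc j).2
  rw [sum_neg_distrib] at lower upper
  exact ⟨by linarith, by linarith⟩

open Finset in
/-- Proposition 2 (mixed-monotonicity output bound, one output component):
given interval bounds `[Jlo, Jhi]` on all partial derivatives of `f` over the box
`B = [a, b]`, the value of `f` on the box is sandwiched between evaluations of `f`
at the corner-type points `ψlo`, `ψhi` corrected by the slack vector `α`. -/
theorem mixed_monotonicity_bound
    {n : ℕ} (hn : 0 < n) (a b : Fin n → ℝ) (hab : ∀ j, a j ≤ b j)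
    (f : (Fin n → ℝ) → ℝ)
    (U : Set (Fin n → ℝ)) (hUopen : IsOpen U) (hUconv : Convex ℝ U)
    (hBU : {x : Fin n → ℝ | ∀ j, a j ≤ x j ∧ x j ≤ b j} ⊆ U)
    (hf : DifferentiableOn ℝ f U)
    (Jlo Jhi : Fin n → ℝ)
    (hJ : ∀ x ∈ {x : Fin n → ℝ | ∀ j, a j ≤ x j ∧ x j ≤ b j}, ∀ j,
        Jlo j ≤ fderiv ℝ f x (Pi.single j 1) ∧ fderiv ℝ f x (Pi.single j 1) ≤ Jhi j)
    (ψlo ψhi α : Fin n → ℝ)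
    (hψlo : ∀ j, ψlo j = if 0 ≤ (Jlo j + Jhi j) / 2 then a j else b j)
    (hψhi : ∀ j, ψhi j = if 0 ≤ (Jlo j + Jhi j) / 2 then b j else a j)
    (hα : ∀ j, α j = if 0 ≤ (Jlo j + Jhi j) / 2 then min 0 (Jlo j) else max 0 (Jhi j)) :
    ∀ x ∈ {x : Fin n → ℝ | ∀ j, a j ≤ x j ∧ x j ≤ b j},
      f ψlo - ∑ j, α j * (ψlo j - ψhi j) ≤ f x ∧
      f x ≤ f ψhi + ∑ j, α j * (ψlo j - ψhi j) :=
  mixed_monotonicity_bound_general a b f U hUopen hBU hf Jlo Jhi hJ ψlo ψhi α hψlo hψhi hα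
end

section
/- Let ζ₁, ζ₂, ζ₃, ζ₄ ∈ ℝ with ζ₂ ≠ ζ₄, let θ = arctan((ζ₁ - ζ₃)/(ζ₄ - ζ₂)) and ρ = ζ₁ · cos θ + ζ₂ · sin θ. Then for every point (x, y) ∈ ℝ², the point lies on the line through P₁ = (ζ₁, ζ₂) and P₂ = (ζ₃, ζ₄) (i.e., there exists t ∈ ℝ with (x, y) = (1-t) · P₁ + t · P₂) if and only if x · cos θ + y · sin θ = ρ. -/
/-!
The unit vector `(cos θ, sin θ)` with `θ = arctan m` is the positive multiple `cos θ • (1, m)`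
of `(1, m)`, and for `m = (ζ₁ - ζ₃) / (ζ₄ - ζ₂)` the vector `(1, m)` is orthogonal to the
direction `P₂ - P₁`. So `(cos θ, sin θ)` is a normal of the line `P₁P₂`, and a line in the plane
is the level set through `P₁` of the linear form given by any nonzero normal.
-/

open Real

theorem exists_line_param_iff_of_normal {a b p₁ p₂ q₁ q₂ : ℝ} (ha : a ≠ 0) (hq : q₂ ≠ p₂)
    (hperp : a * (q₁ - p₁) + b * (q₂ - p₂) = 0) (x y : ℝ) :
    (∃ t : ℝ, x = (1 - t) * p₁ + t * q₁ ∧ y = (1 - t) * p₂ + t * q₂) ↔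
      a * x + b * y = a * p₁ + b * p₂ := by
  constructor
  · rintro ⟨t, rfl, rfl⟩
    linear_combination t * hperp
  · intro hxy
    have hd : q₂ - p₂ ≠ 0 := sub_ne_zero.mpr hq
    refine ⟨(y - p₂) / (q₂ - p₂), ?_, ?_⟩
    · field_simp
      apply mul_left_cancel₀ ha
      linear_combination (q₂ - p₂) * hxy - (y - p₂) * hperp
    · field_simp
      ring

theorem sin_arctan_eq_mul_cos_arctan (m : ℝ) : sin (arctan m) = m * cos (arctan m) := by
  rw [← tan_mul_cos (cos_arctan_pos m).ne', tan_arctan]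

theorem cos_arctan_mul_add_sin_arctan_mul_eq_zero {u v : ℝ} (hv : v ≠ 0) :
    cos (arctan (-u / v)) * u + sin (arctan (-u / v)) * v = 0 := by
  rw [sin_arctan_eq_mul_cos_arctan]
  field_simp
  ring

/-- The Hough normal form exactly characterizes the line through the two projected
runway endpoints `P₁ = (ζ₁, ζ₂)` and `P₂ = (ζ₃, ζ₄)`. -/
theorem hough_line_characterization
    (ζ₁ ζ₂ ζ₃ ζ₄ : ℝ) (h : ζ₂ ≠ ζ₄)
    (θ : ℝ) (hθ : θ = arctan ((ζ₁ - ζ₃) / (ζ₄ - ζ₂)))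
    (ρ : ℝ) (hρ : ρ = ζ₁ * cos θ + ζ₂ * sin θ)
    (x y : ℝ) :
    (∃ t : ℝ, x = (1 - t) * ζ₁ + t * ζ₃ ∧ y = (1 - t) * ζ₂ + t * ζ₄) ↔
      x * cos θ + y * sin θ = ρ := by
  have hperp : cos θ * (ζ₃ - ζ₁) + sin θ * (ζ₄ - ζ₂) = 0 := by
    rw [hθ, ← neg_sub ζ₃ ζ₁]
    exact cos_arctan_mul_add_sin_arctan_mul_eq_zero (sub_ne_zero.mpr h.symm)
  have hcos : cos θ ≠ 0 := hθ ▸ (cos_arctan_pos _).ne'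
  rw [exists_line_param_iff_of_normal hcos h.symm hperp, hρ]
  constructor <;> intro hxy <;> linarith
end
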